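/- Let G, U : ℕ → M₂(ℂ) satisfy G_0 = U_0 = I and ∑_{j=0}^{n} G_j·U_{n−j} = 0 for all n ≥ 1, and define Z_{k,l} := −∑_{j=0}^{k} G_j·U_{k+l+1−j}. Then in the ring of 2×2 matrices over ℂ[[x,y]] the generating identity holds: (y − x)·∑_{k,l≥0} Z_{k,l}·x^k·y^l = I − (∑_{k≥0} G_k·x^k)·(∑_{l≥0} U_l·y^l). -/

import Mathlib

/-!
Compare coefficients of `x^a y^b`. Multiplying by `y - x` turns the left-hand side into
`Z_{a,b-1} - Z_{a-1,b}`, and the two sums defining these differ only in their last term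
`G_a U_b`. On the boundary `a = 0` this uses `G_0 = 1`, and on `b = 0` the sum `Z_{a-1,0}`
is, up to sign, the inversion relation of order `a` without its last term `G_a U_0`.
-/

open MvPowerSeries

theorem Finsupp.eq_single_zero_add_single_one {M : Type*} [AddCommMonoid M] (d : Fin 2 →₀ M) :
    d = single 0 (d 0) + single 1 (d 1) := by
  rw [← Fin.sum_univ_two (fun i => single i (d i)), univ_sum_single]

namespace MvPowerSeries

theorem coeff_X_mul_eq_ite {σ R : Type*} [CommSemiring R] [DecidableEq σ]
    (s : σ) (f : MvPowerSeries σ R) (d : σ →₀ ℕ) :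
    coeff d (X s * f) = if d s = 0 then 0 else coeff (d - Finsupp.single s 1) f := by
  rw [X, coeff_monomial_mul, one_mul]
  by_cases h : d s = 0 <;> simp [h, Finsupp.single_le_iff, Nat.one_le_iff_ne_zero]

theorem coeff_mul_of_eq_zero_of_ne_zero {R : Type*} [CommSemiring R]
    {f g : MvPowerSeries (Fin 2) R} (hf : ∀ d : Fin 2 →₀ ℕ, d 1 ≠ 0 → coeff d f = 0)
    (hg : ∀ d : Fin 2 →₀ ℕ, d 0 ≠ 0 → coeff d g = 0) (d : Fin 2 →₀ ℕ) :
    coeff d (f * g) =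
      coeff (Finsupp.single 0 (d 0)) f * coeff (Finsupp.single 1 (d 1)) g := by
  rw [coeff_mul, Finset.sum_eq_single_of_mem (Finsupp.single 0 (d 0), Finsupp.single 1 (d 1))]
  · rw [Finset.HasAntidiagonal.mem_antidiagonal, ← Finsupp.eq_single_zero_add_single_one]
  rintro ⟨p, q⟩ hpq hne
  rw [Finset.HasAntidiagonal.mem_antidiagonal] at hpq
  by_cases hp : p 1 = 0
  · by_cases hq : q 0 = 0
    · refine absurd ?_ hne
      rw [p.eq_single_zero_add_single_one, q.eq_single_zero_add_single_one, ← hpq]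
      simp [hp, hq]
    · rw [hg q hq, mul_zero]
  · rw [hf p hp, zero_mul]

end MvPowerSeries

section AffineCoordinates

variable {R : Type*} [Ring R] (G U : ℕ → R)

def affineCoord (k l : ℕ) : R := -∑ j ∈ Finset.range (k + 1), G j * U (k + l + 1 - j)

theorem affineCoord_succ_left (k l : ℕ) :
    affineCoord G U (k + 1) l = affineCoord G U k (l + 1) - G (k + 1) * U (l + 1) := by
  have hidx : ∀ j, k + 1 + l + 1 - j = k + (l + 1) + 1 - j := fun j => by omega
  simp only [affineCoord, Finset.sum_range_succ _ (k + 1), hidx]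
  rw [show k + (l + 1) + 1 - (k + 1) = l + 1 by omega]
  abel

variable {G U}

theorem affineCoord_zero_left (hG0 : G 0 = 1) (l : ℕ) : affineCoord G U 0 l = -U (l + 1) := by
  simp [affineCoord, hG0]

theorem affineCoord_zero_right (hU0 : U 0 = 1)
    (hinv : ∀ n, 1 ≤ n → ∑ j ∈ Finset.range (n + 1), G j * U (n - j) = 0) (k : ℕ) :
    affineCoord G U k 0 = G (k + 1) := by
  have h := hinv (k + 1) (Nat.le_add_left 1 k)
  rw [Finset.sum_range_succ, Nat.sub_self, hU0, mul_one] at h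
  rw [affineCoord, add_zero, neg_eq_iff_add_eq_zero]
  exact h

end AffineCoordinates

/-- Generating identity `(y-x)·∑ Z_{k,l} x^k y^l = I - G(x)·U(y)` for the
matrix-valued affine coordinates, in the ring of `2×2` matrices over `ℂ[[x,y]]`
(the variable `x` is `MvPowerSeries.X 0` and `y` is `MvPowerSeries.X 1`). -/
theorem matrix_affine_coordinates_generating_identity
    (G U : ℕ → Matrix (Fin 2) (Fin 2) ℂ)
    (hG0 : G 0 = 1) (hU0 : U 0 = 1)
    (hinv : ∀ n : ℕ, 1 ≤ n → ∑ j ∈ Finset.range (n + 1), G j * U (n - j) = 0)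
    (Z : ℕ → ℕ → Matrix (Fin 2) (Fin 2) ℂ)
    (hZ : ∀ k l : ℕ, Z k l = -∑ j ∈ Finset.range (k + 1), G j * U (k + l + 1 - j))
    (S Gser User : Matrix (Fin 2) (Fin 2) (MvPowerSeries (Fin 2) ℂ))
    (hS : ∀ (d : Fin 2 →₀ ℕ) (i j : Fin 2),
      MvPowerSeries.coeff d (S i j) = Z (d 0) (d 1) i j)
    (hGser : ∀ (d : Fin 2 →₀ ℕ) (i j : Fin 2),
      MvPowerSeries.coeff d (Gser i j) = if d 1 = 0 then G (d 0) i j else 0)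
    (hUser : ∀ (d : Fin 2 →₀ ℕ) (i j : Fin 2),
      MvPowerSeries.coeff d (User i j) = if d 0 = 0 then U (d 1) i j else 0) :
    (MvPowerSeries.X 1 - MvPowerSeries.X 0 : MvPowerSeries (Fin 2) ℂ) • S =
      1 - Gser * User := by
  obtain rfl : Z = affineCoord G U := funext fun k => funext (hZ k)
  ext i j d
  have hprod : coeff d ((Gser * User) i j) = (G (d 0) * U (d 1)) i j := by
    simp only [Matrix.mul_apply, map_sum]
    refine Finset.sum_congr rfl fun k _ => ?_
    rw [coeff_mul_of_eq_zero_of_ne_zero (fun e he => by simp [hGser, he])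
      (fun e he => by simp [hUser, he]), hGser, hUser]
    simp
  rw [Matrix.smul_apply, smul_eq_mul, sub_mul, map_sub, coeff_X_mul_eq_ite, coeff_X_mul_eq_ite,
    Matrix.sub_apply, map_sub, hprod, Matrix.one_apply, apply_ite (coeff d), coeff_one,
    LinearMap.map_zero]
  obtain ⟨a, b, rfl⟩ : ∃ a b, d = Finsupp.single 0 a + Finsupp.single 1 b :=
    ⟨_, _, d.eq_single_zero_add_single_one⟩
  rcases a with _ | a <;> rcases b with _ | b <;>
    simp [hS, Matrix.one_apply, hG0, hU0, affineCoord_zero_left hG0,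
      affineCoord_zero_right hU0 hinv, affineCoord_succ_left]
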